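/- Let q ∈ (0,1) with q > 1/2, and let p ∈ Δ_2 with p_1 = p_2. Then G^n(p) converges to ((2q−1)/(4q−1), (2q−1)/(4q−1), 1/(4q−1)) as n → ∞. -/

import Mathlib

open Filter Topology

/-- The map G = (G₁,G₂,G₃) on ℝ³ (with parameter q):
G₁(x) = x₁² + 2q x₁ x₃, G₂(x) = x₂² + 2q x₂ x₃,
G₃(x) = x₃² + 2 x₁ x₂ + 2(1−q) x₁ x₃ + 2(1−q) x₂ x₃. -/
noncomputable def Gmap (q : ℝ) (x : ℝ × ℝ × ℝ) : ℝ × ℝ × ℝ :=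
  (x.1 ^ 2 + 2 * q * x.1 * x.2.2,
   x.2.1 ^ 2 + 2 * q * x.2.1 * x.2.2,
   x.2.2 ^ 2 + 2 * x.1 * x.2.1 + 2 * (1 - q) * x.1 * x.2.2
     + 2 * (1 - q) * x.2.1 * x.2.2)

/-- The open simplex Δ₂ ⊆ ℝ³. -/
def simplex2 : Set (ℝ × ℝ × ℝ) :=
  {p | p.1 + p.2.1 + p.2.2 = 1 ∧ 0 < p.1 ∧ 0 < p.2.1 ∧ 0 < p.2.2}

/-!
On the invariant line `p = (t, t, 1 - 2t)` the map `G` acts as `f t = 2qt - (4q-1)t²`, and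
`f t - s = (t - s)(1 - (4q-1)t)` for the fixed point `s = (2q-1)/(4q-1)`. For `q ∈ (1/2, 1)` every
interval `[δ, 1/2]` with `δ ≤ min s (1/8)` is invariant, and on it the factor `1 - (4q-1)t` has
absolute value at most `1 - (4q-1)δ < 1`, so the iterates converge geometrically to `s`.
-/

open Set Function

theorem tendsto_iterate_of_dist_le_mul {α : Type*} [PseudoMetricSpace α] {f : α → α} {S : Set α}
    {s : α} {L : ℝ} (hS : MapsTo f S S) (hL0 : 0 ≤ L) (hL1 : L < 1)
    (hf : ∀ x ∈ S, dist (f x) s ≤ L * dist x s) {x : α} (hx : x ∈ S) :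
    Tendsto (fun n => f^[n] x) atTop (𝓝 s) := by
  have hbound : ∀ n : ℕ, dist (f^[n] x) s ≤ L ^ n * dist x s := by
    intro n
    induction n with
    | zero => simp
    | succ n ih =>
      rw [iterate_succ_apply', pow_succ', mul_assoc]
      exact (hf _ (hS.iterate n hx)).trans (mul_le_mul_of_nonneg_left ih hL0)
  rw [tendsto_iff_dist_tendsto_zero]
  refine squeeze_zero (fun _ => dist_nonneg) hbound ?_
  simpa using (tendsto_pow_atTop_nhds_zero_of_lt_one hL0 hL1).mul_const (dist x s)

def symmLine (t : ℝ) : ℝ × ℝ × ℝ := (t, t, 1 - 2 * t)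

theorem continuous_symmLine : Continuous symmLine := by
  unfold symmLine
  fun_prop

noncomputable def symmStep (q t : ℝ) : ℝ := 2 * q * t - (4 * q - 1) * t ^ 2

theorem semiconj_symmLine_Gmap (q : ℝ) : Semiconj symmLine (symmStep q) (Gmap q) := by
  intro t
  simp only [symmLine, symmStep, Gmap, Prod.mk.injEq]
  refine ⟨?_, ?_, ?_⟩ <;> ring

section SymmStep

variable {q : ℝ}

theorem symmStep_sub_fixedPoint (hq : 4 * q - 1 ≠ 0) (t : ℝ) :
    symmStep q t - (2 * q - 1) / (4 * q - 1) =
      (t - (2 * q - 1) / (4 * q - 1)) * (1 - (4 * q - 1) * t) := by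
  unfold symmStep
  linear_combination (-t) * div_mul_cancel₀ (2 * q - 1) hq

theorem mapsTo_symmStep_Icc (hq : 1 / 2 < q) (hq1 : q < 1) {δ : ℝ} (hδ0 : 0 < δ)
    (hδs : δ ≤ (2 * q - 1) / (4 * q - 1)) (hδ : δ ≤ 1 / 4) :
    MapsTo (symmStep q) (Icc δ (1 / 2)) (Icc δ (1 / 2)) := by
  rintro x ⟨hδx, hx⟩
  have ha : 0 < 4 * q - 1 := by linarith
  have hδa : δ * (4 * q - 1) ≤ 2 * q - 1 := (le_div_iff₀ ha).1 hδs
  -- `symmStep q` is concave, `symmStep q δ ≥ δ` and `symmStep q (1/2) = 1/4`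
  have hconc : 0 ≤ (x - δ) * (1 / 2 - x) := mul_nonneg (by linarith) (by linarith)
  have hδ_le : δ ≤ symmStep q δ := by unfold symmStep; nlinarith
  unfold symmStep at hδ_le ⊢
  constructor
  · nlinarith
  · nlinarith [sq_nonneg ((4 * q - 1) * x - q), mul_pos (sub_pos.2 hq) (sub_pos.2 hq1)]

theorem abs_one_sub_mul_le (hq : 1 / 2 < q) (hq1 : q < 1) {δ x : ℝ} (hδ : δ ≤ 1 / 8)
    (hx : x ∈ Icc δ (1 / 2)) : |1 - (4 * q - 1) * x| ≤ 1 - (4 * q - 1) * δ := by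
  obtain ⟨hδx, hx⟩ := hx
  rw [abs_le]
  constructor <;> nlinarith

theorem tendsto_iterate_symmStep (hq : 1 / 2 < q) (hq1 : q < 1) {t : ℝ} (ht0 : 0 < t)
    (ht : t ≤ 1 / 2) :
    Tendsto (fun n => (symmStep q)^[n] t) atTop (𝓝 ((2 * q - 1) / (4 * q - 1))) := by
  have ha : 0 < 4 * q - 1 := by linarith
  set s := (2 * q - 1) / (4 * q - 1)
  have hs : 0 < s := div_pos (by linarith) ha
  set δ := min t (min s (1 / 8))
  have hδ0 : 0 < δ := lt_min ht0 (lt_min hs (by norm_num))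
  have hδs : δ ≤ s := (min_le_right _ _).trans (min_le_left _ _)
  have hδ8 : δ ≤ 1 / 8 := (min_le_right _ _).trans (min_le_right _ _)
  refine tendsto_iterate_of_dist_le_mul (mapsTo_symmStep_Icc hq hq1 hδ0 hδs (by linarith))
    (L := 1 - (4 * q - 1) * δ) (by nlinarith) (by nlinarith) ?_ ⟨min_le_left _ _, ht⟩
  intro x hx
  rw [Real.dist_eq, Real.dist_eq, symmStep_sub_fixedPoint ha.ne', abs_mul, mul_comm]
  exact mul_le_mul_of_nonneg_right (abs_one_sub_mul_le hq hq1 hδ8 hx) (abs_nonneg _)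

end SymmStep

theorem tendsto_symmetric_fixed_point_general (q : ℝ) (hq1 : q < 1)
    (hq : 1 / 2 < q) (p : ℝ × ℝ × ℝ) (hp : p ∈ simplex2) (h12 : p.1 = p.2.1) :
    Tendsto (fun n => (Gmap q)^[n] p) atTop
      (𝓝 ((2 * q - 1) / (4 * q - 1), (2 * q - 1) / (4 * q - 1),
          1 / (4 * q - 1))) := by
  obtain ⟨hsum, hp1, -, hp3⟩ := hp
  have hp_line : p = symmLine p.1 := by
    ext <;> simp only [symmLine] <;> linarith
  have hlim := (continuous_symmLine.tendsto _).comp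
    (tendsto_iterate_symmStep hq hq1 hp1 (by linarith))
  have htarget : symmLine ((2 * q - 1) / (4 * q - 1)) =
      ((2 * q - 1) / (4 * q - 1), (2 * q - 1) / (4 * q - 1), 1 / (4 * q - 1)) := by
    have ha : 4 * q - 1 ≠ 0 := by linarith
    simp only [symmLine, Prod.mk.injEq, true_and]
    rw [eq_div_iff ha]
    linear_combination (-2) * div_mul_cancel₀ (2 * q - 1) ha
  rw [hp_line, ← htarget]
  have hiter (n : ℕ) (t : ℝ) : (Gmap q)^[n] (symmLine t) = symmLine ((symmStep q)^[n] t) :=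
    ((semiconj_symmLine_Gmap q).iterate_right n t).symm
  simpa only [comp_def, hiter] using hlim

/-- If q > 1/2 and p₁ = p₂, then
G^n(p) → ((2q−1)/(4q−1), (2q−1)/(4q−1), 1/(4q−1)). -/
theorem tendsto_symmetric_fixed_point (q : ℝ) (hq0 : 0 < q) (hq1 : q < 1)
    (hq : 1 / 2 < q) (p : ℝ × ℝ × ℝ) (hp : p ∈ simplex2) (h12 : p.1 = p.2.1) :
    Tendsto (fun n => (Gmap q)^[n] p) atTop
      (𝓝 ((2 * q - 1) / (4 * q - 1), (2 * q - 1) / (4 * q - 1),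
          1 / (4 * q - 1))) :=
  tendsto_symmetric_fixed_point_general q hq1 hq p hp h12
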